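/- arXiv:1807.11251 — 2 statements merged into one kernel-verified Lean document; each statement's English description precedes it below -/
import Mathlib

section
/- Let ⪯ be a quasi-ordering on a unital ring R and q a prime ideal of R. The following are equivalent: (1) q is ⪯-convex (0 ⪯ x ⪯ y with y ∈ q implies x ∈ q); (2) ⪯ ≤ ⪯₁ for some quasi-ordering ⪯₁ with support q; (3) ⪯ ≤ ⪯_q, where ⪯_q is the trivial quasi-ordering with support q. -/
/-!
Under ⪯_q, `x ⪯_q y` holds exactly when `x ∈ q` or `y ∉ q`, so being finer than ⪯_q is a
reformulation of ⪯-convexity of `q`. Conversely, if ⪯ is finer than a quasi-ordering ⪯₁ with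
support `q`, then `0 ⪯ x ⪯ y ∈ q` gives `0 ⪯₁ x ⪯₁ y ∼₁ 0`, so `x ∈ q`. Primality of `q` is what
makes ⪯_q a quasi-ordering: `a * x * b ∈ q` iff one of the factors is in `q`.
-/

variable {R : Type*} [Ring R]

/-- A quasi-ordering on a unital ring `R` (Definition 2.2 of the paper):
a reflexive, transitive, total binary relation satisfying (QR1)-(QR4).
Here `x ∼ y` means `p x y ∧ p y x` and `x ≺ y` means `p x y ∧ ¬ p y x`. -/
structure IsQuasiOrdering (p : R → R → Prop) : Prop where
  refl : ∀ x, p x x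
  trans : ∀ x y z, p x y → p y z → p x z
  total : ∀ x y, p x y ∨ p y x
  qr1 : p 0 1 ∧ ¬ p 1 0
  qr2 : ∀ a b x y, p 0 a → p 0 b → p x y → p (a * x * b) (a * y * b)
  qr3 : ∀ a b x y, p 0 a → ¬ p a 0 → p 0 b → ¬ p b 0 → p (a * x * b) (a * y * b) → p x y
  qr4 : ∀ x y z, ¬ (p z y ∧ p y z) → p x y → p (x + z) (y + z)

/-- `p₁` is finer than `p₂` (Definition 3.1 of the paper):
`0 ⪯₁ x ⪯₁ y` implies `x ⪯₂ y`. -/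
def Coarser (p₁ p₂ : R → R → Prop) : Prop :=
  ∀ x y : R, p₁ 0 x → p₁ x y → p₂ x y

/-- A (completely) prime two-sided ideal of `R`, given as a set. -/
structure IsCompletelyPrimeIdeal (q : Set R) : Prop where
  zero_mem : (0 : R) ∈ q
  add_mem : ∀ {x y : R}, x ∈ q → y ∈ q → x + y ∈ q
  neg_mem : ∀ {x : R}, x ∈ q → -x ∈ q
  mul_mem_left : ∀ (r : R) {x : R}, x ∈ q → r * x ∈ q
  mul_mem_right : ∀ (r : R) {x : R}, x ∈ q → x * r ∈ q
  one_not_mem : (1 : R) ∉ q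
  mem_or_mem : ∀ {x y : R}, x * y ∈ q → x ∈ q ∨ y ∈ q

namespace IsCompletelyPrimeIdeal

variable {q : Set R}

theorem add_mem_iff_right (hq : IsCompletelyPrimeIdeal q) {y : R} (hy : y ∈ q) (z : R) :
    y + z ∈ q ↔ z ∈ q :=
  ⟨fun h => by simpa using hq.add_mem (hq.neg_mem hy) h, hq.add_mem hy⟩

theorem add_mem_iff_left (hq : IsCompletelyPrimeIdeal q) {z : R} (hz : z ∈ q) (y : R) :
    y + z ∈ q ↔ y ∈ q :=
  ⟨fun h => by simpa using hq.add_mem h (hq.neg_mem hz), fun hy => hq.add_mem hy hz⟩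

theorem mul_mul_mem_iff (hq : IsCompletelyPrimeIdeal q) (a x b : R) :
    a * x * b ∈ q ↔ a ∈ q ∨ x ∈ q ∨ b ∈ q := by
  constructor
  · intro h
    rcases hq.mem_or_mem h with h | hb
    · rcases hq.mem_or_mem h with ha | hx <;> simp [*]
    · simp [hb]
  · rintro (ha | hx | hb)
    · exact hq.mul_mem_right b (hq.mul_mem_right x ha)
    · exact hq.mul_mem_right b (hq.mul_mem_left a hx)
    · exact hq.mul_mem_left _ hb

end IsCompletelyPrimeIdeal

def IsConvex (p : R → R → Prop) (M : Set R) : Prop :=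
  ∀ x y : R, p 0 x → p x y → y ∈ M → x ∈ M

def trivialQuasiOrdering (q : Set R) (x y : R) : Prop :=
  x ∈ q ∨ y ∉ q

section TrivialQuasiOrdering

variable {q : Set R}

theorem isQuasiOrdering_trivialQuasiOrdering (hq : IsCompletelyPrimeIdeal q) :
    IsQuasiOrdering (trivialQuasiOrdering q) where
  refl _ := em _
  trans _ _ _ := by unfold trivialQuasiOrdering; tauto
  total _ _ := by unfold trivialQuasiOrdering; tauto
  qr1 := by simp [trivialQuasiOrdering, hq.zero_mem, hq.one_not_mem]
  qr2 a b x y _ _ := by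
    simp only [trivialQuasiOrdering, hq.mul_mul_mem_iff]
    tauto
  qr3 a b x y _ ha _ hb := by
    have := hq.zero_mem
    simp only [trivialQuasiOrdering, hq.mul_mul_mem_iff] at *
    tauto
  qr4 _ y z hzy _ := by
    -- `z ≁ y` means exactly one of `y`, `z` lies in `q`, and then `y + z ∉ q`.
    refine Or.inr fun hyz => hzy ?_
    by_cases hy : y ∈ q
    · exact ⟨Or.inl ((hq.add_mem_iff_right hy z).1 hyz), Or.inl hy⟩
    · exact ⟨Or.inr hy, Or.inr fun hz => hy ((hq.add_mem_iff_left hz y).1 hyz)⟩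

theorem trivialQuasiOrdering_equiv_zero_iff (hq : IsCompletelyPrimeIdeal q) (x : R) :
    (trivialQuasiOrdering q x 0 ∧ trivialQuasiOrdering q 0 x) ↔ x ∈ q := by
  simp [trivialQuasiOrdering, hq.zero_mem]

theorem coarser_trivialQuasiOrdering_iff (p : R → R → Prop) (q : Set R) :
    Coarser p (trivialQuasiOrdering q) ↔ IsConvex p q :=
  ⟨fun h x y h0x hxy hy => (h x y h0x hxy).resolve_right (not_not_intro hy),
    fun h x y h0x hxy => or_iff_not_imp_right.2 fun hy => h x y h0x hxy (not_not.1 hy)⟩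

end TrivialQuasiOrdering

theorem IsQuasiOrdering.isConvex_of_coarser {p p₁ : R → R → Prop} {q : Set R}
    (hp : IsQuasiOrdering p) (hp₁ : IsQuasiOrdering p₁)
    (hsupp : ∀ x : R, (p₁ x 0 ∧ p₁ 0 x) ↔ x ∈ q) (hc : Coarser p p₁) : IsConvex p q :=
  fun x y h0x hxy hy =>
    (hsupp x).1 ⟨hp₁.trans x y 0 (hc x y h0x hxy) ((hsupp y).2 hy).1, hc 0 x (hp.refl 0) h0x⟩

/-- Proposition 4.14: for a quasi-ordering ⪯ and a prime ideal q, the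
following are equivalent: (1) q is ⪯-convex; (2) ⪯ is finer than some
quasi-ordering with support q; (3) ⪯ is finer than the trivial quasi-ordering
⪯_q. -/
theorem convex_iff_coarser_trivial (q : Set R) (hq : IsCompletelyPrimeIdeal q)
    (p : R → R → Prop) (hp : IsQuasiOrdering p) :
    ((∀ x y : R, p 0 x → p x y → y ∈ q → x ∈ q) ↔
        Coarser p (fun x y : R => x ∈ q ∨ y ∉ q)) ∧
    ((∃ p₁ : R → R → Prop, IsQuasiOrdering p₁ ∧
        (∀ x : R, (p₁ x 0 ∧ p₁ 0 x) ↔ x ∈ q) ∧ Coarser p p₁) ↔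
        Coarser p (fun x y : R => x ∈ q ∨ y ∉ q)) := by
  have hconvex := coarser_trivialQuasiOrdering_iff p q
  refine ⟨hconvex.symm,
    fun ⟨p₁, hp₁, hsupp, hc⟩ => hconvex.2 (hp.isConvex_of_coarser hp₁ hsupp hc),
    fun hc => ⟨_, isQuasiOrdering_trivialQuasiOrdering hq, trivialQuasiOrdering_equiv_zero_iff hq, hc⟩⟩
end

section
/- Let (R, ⪯) be a quasi-ordered ring with support q. Then ⪯ is special (for every x ∉ q there exists y ∈ R with 1 ⪯ xy) if and only if q is the only proper ⪯-convex two-sided ideal of R. -/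
variable {R : Type*} [Ring R]

/-- A two-sided ideal of R, given as a set. -/
structure IsIdealSet (I : Set R) : Prop where
  zero_mem : (0 : R) ∈ I
  add_mem : ∀ {x y : R}, x ∈ I → y ∈ I → x + y ∈ I
  neg_mem : ∀ {x : R}, x ∈ I → -x ∈ I
  mul_mem_left : ∀ (r : R) {x : R}, x ∈ I → r * x ∈ I
  mul_mem_right : ∀ (r : R) {x : R}, x ∈ I → x * r ∈ I

/-! If `⪯` is special, a proper convex ideal contains the support `q` by convexity, and an
element `w ∉ q` in it would give `1 ⪯ w y` inside it, so it would be all of `R`.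

Conversely, for `x ∉ q` the set of `w` with `w ⪯ a x b` and `-w ⪯ a x b` for some `a, b` is a
convex ideal containing `x`, hence all of `R`; so `1 ⪯ a x b`, and multiplying by `|a|` on the
right and cancelling it on the left yields `1 ⪯ x (b a)`. Closure under addition comes from the
dichotomy of quasi-orderings: if `¬ 0 ⪯ -1`, then `⪯` is an ordering, invariant under
translation, so `u, v ⪯ w` gives `u + v ⪯ 2w`; if `0 ⪯ -1`, then `⪯` is the reverse of a
valuation and `u + v ⪯ w` is the ultrametric inequality. -/

theorem IsIdealSet.eq_univ_of_one_mem {I : Set R} (hI : IsIdealSet I) (h : (1 : R) ∈ I) :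
    I = Set.univ :=
  Set.eq_univ_of_forall fun r => by simpa using hI.mul_mem_left r h

namespace IsQuasiOrdering

def support (p : R → R → Prop) : Set R := {x | p x 0 ∧ p 0 x}

def IsConvexSet (p : R → R → Prop) (I : Set R) : Prop :=
  ∀ x y : R, p 0 x → p x y → y ∈ I → x ∈ I

def IsSpecial (p : R → R → Prop) : Prop :=
  ∀ x : R, x ∉ support p → ∃ y : R, p 1 (x * y)

variable {p : R → R → Prop} {a b c s t u v w x y z : R}

theorem nonneg_neg_of_nonpos (hp : IsQuasiOrdering p) (h : p a 0) : p 0 (-a) := by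
  by_cases hc : p (-a) 0 ∧ p 0 (-a)
  · exact hc.2
  · simpa using hp.qr4 a 0 (-a) hc h

theorem nonneg_or_nonneg_neg (hp : IsQuasiOrdering p) (a : R) : p 0 a ∨ p 0 (-a) :=
  (hp.total 0 a).imp_right hp.nonneg_neg_of_nonpos

theorem mul_le_mul_left (hp : IsQuasiOrdering p) (hs : p 0 s) (h : p x y) :
    p (s * x) (s * y) := by
  simpa only [mul_one] using hp.qr2 s 1 x y hs hp.qr1.1 h

theorem mul_le_mul_right (hp : IsQuasiOrdering p) (hs : p 0 s) (h : p x y) :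
    p (x * s) (y * s) := by
  simpa only [one_mul] using hp.qr2 1 s x y hp.qr1.1 hs h

theorem le_of_mul_le_mul_left (hp : IsQuasiOrdering p) (hs : p 0 s) (hs' : ¬ p s 0)
    (h : p (s * x) (s * y)) : p x y :=
  hp.qr3 s 1 x y hs hs' hp.qr1.1 hp.qr1.2 (by simpa only [mul_one] using h)

theorem neg_mem_support (hp : IsQuasiOrdering p) (hx : x ∈ support p) : -x ∈ support p := by
  refine ⟨?_, hp.nonneg_neg_of_nonpos hx.1⟩
  by_cases hc : p (-x) x ∧ p x (-x)
  · exact hp.trans _ _ _ hc.1 hx.1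
  · simpa using hp.qr4 0 x (-x) hc hx.2

theorem add_mem_support (hp : IsQuasiOrdering p) (hx : x ∈ support p) (hy : y ∈ support p) :
    x + y ∈ support p := by
  by_contra hs
  have hnx := hp.neg_mem_support hx
  have hle : p y (x + y) := by simpa using hp.qr4 (-x) 0 (x + y) hs hnx.1
  have hge : p (x + y) y := by
    have hc : ¬ (p (x + y) (-x) ∧ p (-x) (x + y)) := fun ⟨h₁, h₂⟩ =>
      hs ⟨hp.trans _ _ _ h₁ hnx.1, hp.trans _ _ _ hnx.2 h₂⟩
    simpa using hp.qr4 0 (-x) (x + y) hc hnx.2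
  exact hs ⟨hp.trans _ _ _ hge hy.1, hp.trans _ _ _ hy.2 hle⟩

theorem mul_mem_support_left (hp : IsQuasiOrdering p) (r : R) (hx : x ∈ support p) :
    r * x ∈ support p := by
  have hnonneg : ∀ s, p 0 s → s * x ∈ support p := fun s hs =>
    ⟨by simpa using hp.mul_le_mul_left hs hx.1, by simpa using hp.mul_le_mul_left hs hx.2⟩
  rcases hp.nonneg_or_nonneg_neg r with hr | hr
  · exact hnonneg r hr
  · simpa using hp.neg_mem_support (hnonneg (-r) hr)

theorem mul_mem_support_right (hp : IsQuasiOrdering p) (r : R) (hx : x ∈ support p) :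
    x * r ∈ support p := by
  have hnonneg : ∀ s, p 0 s → x * s ∈ support p := fun s hs =>
    ⟨by simpa using hp.mul_le_mul_right hs hx.1, by simpa using hp.mul_le_mul_right hs hx.2⟩
  rcases hp.nonneg_or_nonneg_neg r with hr | hr
  · exact hnonneg r hr
  · simpa using hp.neg_mem_support (hnonneg (-r) hr)

theorem add_equiv_of_mem_support (hp : IsQuasiOrdering p) (he : c ∈ support p) (w : R) :
    p (c + w) w ∧ p w (c + w) := by
  by_cases hw : w ∈ support p
  · have hcw := hp.add_mem_support he hw
    exact ⟨hp.trans _ _ _ hcw.1 hw.2, hp.trans _ _ _ hw.1 hcw.2⟩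
  · refine ⟨by simpa using hp.qr4 c 0 w hw he.1, ?_⟩
    have hc : ¬ (p w c ∧ p c w) := fun ⟨h₁, h₂⟩ =>
      hw ⟨hp.trans _ _ _ h₁ he.1, hp.trans _ _ _ he.2 h₂⟩
    simpa using hp.qr4 0 c w hc he.2

theorem add_le_add_of_sub_nonpos (hp : IsQuasiOrdering p) (h : p (x - y) 0) (z : R) :
    p (x + z) (y + z) := by
  by_cases hq : y + z ∈ support p
  · have hsplit : x + z = (y + z) + (x - y) := by abel
    rw [hsplit]
    exact hp.trans _ _ _ (hp.add_equiv_of_mem_support hq (x - y)).1 (hp.trans _ _ _ h hq.2)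
  · have hsum : x - y + (y + z) = x + z := by abel
    simpa only [hsum, zero_add] using hp.qr4 (x - y) 0 (y + z) hq h

theorem mem_support_of_equiv_neg (hp : IsQuasiOrdering p) (hO : ¬ p 0 (-1))
    (h₁ : p t (-t)) (h₂ : p (-t) t) : t ∈ support p := by
  have h0t : p 0 t := (hp.nonneg_or_nonneg_neg t).elim id fun h => hp.trans _ _ _ h h₂
  refine ⟨?_, h0t⟩
  by_contra ht
  exact hO (hp.le_of_mul_le_mul_left h0t ht (by simpa using hp.trans _ _ _ h0t h₁))

theorem sub_nonpos_of_le (hp : IsQuasiOrdering p) (hO : ¬ p 0 (-1)) (h : p x y) :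
    p (x - y) 0 := by
  by_cases hy : p (-y) y ∧ p y (-y)
  · have hyq := hp.mem_support_of_equiv_neg hO hy.2 hy.1
    have hshift := (hp.add_equiv_of_mem_support (hp.neg_mem_support hyq) x).1
    rw [neg_add_eq_sub] at hshift
    exact hp.trans _ _ _ hshift (hp.trans _ _ _ h hyq.1)
  · simpa [← sub_eq_add_neg] using hp.qr4 x y (-y) hy h

theorem add_le_add_right (hp : IsQuasiOrdering p) (hO : ¬ p 0 (-1)) (h : p x y) (z : R) :
    p (x + z) (y + z) :=
  hp.add_le_add_of_sub_nonpos (hp.sub_nonpos_of_le hO h) z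

theorem neg_le_self_of_nonneg_neg_one (hp : IsQuasiOrdering p) (hV : p 0 (-1)) (t : R) :
    p (-t) t := by
  rcases hp.total (-t) t with h | h
  · exact h
  · simpa using hp.mul_le_mul_left hV h

theorem nonneg_of_nonneg_neg_one (hp : IsQuasiOrdering p) (hV : p 0 (-1)) (t : R) : p 0 t :=
  (hp.total 0 t).elim id fun h =>
    hp.trans _ _ _ (hp.nonneg_neg_of_nonpos h) (hp.neg_le_self_of_nonneg_neg_one hV t)

theorem le_add_of_not_le (hp : IsQuasiOrdering p) (hV : p 0 (-1)) (h : ¬ p y z) :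
    p y (z + y) := by
  simpa using hp.qr4 0 z y (fun h' => h h'.1) (hp.nonneg_of_nonneg_neg_one hV z)

theorem add_le_of_le_of_le (hp : IsQuasiOrdering p) (hV : p 0 (-1)) (ha : p a c) (hb : p b c) :
    p (a + b) c := by
  by_contra h
  have hdom : p (a + b) (-b + (a + b)) := hp.le_add_of_not_le hV fun h' =>
    h (hp.trans _ _ _ h' (hp.trans _ _ _ (hp.neg_le_self_of_nonneg_neg_one hV b) hb))
  have hcancel : -b + (a + b) = a := by abel
  rw [hcancel] at hdom
  exact h (hp.trans _ _ _ hdom ha)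

theorem exists_add_le_natCast_mul (hp : IsQuasiOrdering p) :
    ∃ n : ℕ, ∀ u v w : R, p u w → p v w → p (u + v) (n * w) := by
  by_cases hV : p 0 (-1)
  · exact ⟨1, fun u v w hu hv => by simpa using hp.add_le_of_le_of_le hV hu hv⟩
  · refine ⟨2, fun u v w hu hv => ?_⟩
    have h₁ := hp.add_le_add_right hV hu v
    have h₂ := hp.add_le_add_right hV hv w
    rw [add_comm v w] at h₂
    simpa [two_mul] using hp.trans _ _ _ h₁ h₂

theorem one_le_mul_swap_of_pos (hp : IsQuasiOrdering p) (hs : p 0 s) (hs' : ¬ p s 0)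
    (h : p 1 (s * w)) : p 1 (w * s) :=
  hp.le_of_mul_le_mul_left hs hs' (by simpa [mul_assoc] using hp.mul_le_mul_right hs h)

theorem one_le_mul_swap (hp : IsQuasiOrdering p) (h : p 1 (a * z)) : p 1 (z * a) := by
  have ha : a ∉ support p := fun ha =>
    hp.qr1.2 (hp.trans _ _ _ h (hp.mul_mem_support_right z ha).1)
  rcases hp.nonneg_or_nonneg_neg a with h0 | h0
  · exact hp.one_le_mul_swap_of_pos h0 (fun h' => ha ⟨h', h0⟩) h
  · have hna : ¬ p (-a) 0 := fun h' => ha (by simpa using hp.neg_mem_support ⟨h', h0⟩)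
    simpa using hp.one_le_mul_swap_of_pos h0 hna (w := -z) (by simpa using h)

def AbsLE (p : R → R → Prop) (w z : R) : Prop := p w z ∧ p (-w) z

theorem AbsLE.neg (h : AbsLE p w z) : AbsLE p (-w) z :=
  ⟨h.2, (neg_neg w).symm ▸ h.1⟩

theorem AbsLE.trans_le (h : AbsLE p w z) (hp : IsQuasiOrdering p) (hz : p z c) :
    AbsLE p w c :=
  ⟨hp.trans _ _ _ h.1 hz, hp.trans _ _ _ h.2 hz⟩

theorem AbsLE.mul_left (h : AbsLE p w z) (hp : IsQuasiOrdering p) (hs : p 0 s) :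
    AbsLE p (s * w) (s * z) :=
  ⟨hp.mul_le_mul_left hs h.1, by simpa using hp.mul_le_mul_left hs h.2⟩

theorem AbsLE.mul_right (h : AbsLE p w z) (hp : IsQuasiOrdering p) (hs : p 0 s) :
    AbsLE p (w * s) (z * s) :=
  ⟨hp.mul_le_mul_right hs h.1, by simpa using hp.mul_le_mul_right hs h.2⟩

theorem absLE_of_nonneg_of_le (hp : IsQuasiOrdering p) (h0u : p 0 u) (huz : p u z) :
    AbsLE p u z := by
  refine ⟨huz, ?_⟩
  by_contra hnu
  have hnu0 : ¬ p (-u) 0 := fun h => hnu (hp.trans _ _ _ h (hp.trans _ _ _ h0u huz))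
  have hunu : p u (-u) := (hp.total _ _).resolve_left fun h => hnu (hp.trans _ _ _ h huz)
  -- `u ⪯ -u` is turned into `-u ⪯ u` by multiplying by `u` and cancelling `-u`.
  have hsq : p (-u * -u) (-u * u) := by simpa using hp.mul_le_mul_left h0u hunu
  have h0nu : p 0 (-u) := (hp.total _ _).resolve_left hnu0
  exact hnu (hp.trans _ _ _ (hp.le_of_mul_le_mul_left h0nu hnu0 hsq) huz)

/-- The convex hull of the ideal `(x)`: every element of `(x)` is dominated by some `a x b`. -/
def convexHullSpan (p : R → R → Prop) (x : R) : Set R :=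
  {w | ∃ a b : R, AbsLE p w (a * x * b)}

theorem isIdealSet_convexHullSpan (hp : IsQuasiOrdering p) (x : R) :
    IsIdealSet (convexHullSpan p x) := by
  obtain ⟨n, hn⟩ := hp.exists_add_le_natCast_mul
  have hadd : ∀ {u v z : R}, AbsLE p u z → AbsLE p v z → AbsLE p (u + v) (n * z) :=
    fun hu hv => ⟨hn _ _ _ hu.1 hv.1, by rw [neg_add]; exact hn _ _ _ hu.2 hv.2⟩
  refine ⟨⟨0, 0, by simpa [AbsLE] using hp.refl 0⟩, ?_, ?_, ?_, ?_⟩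
  · rintro u v ⟨a, b, hu⟩ ⟨a', b', hv⟩
    rcases hp.total (a * x * b) (a' * x * b') with h | h
    · exact ⟨n * a', b', by simpa only [mul_assoc] using hadd (hu.trans_le hp h) hv⟩
    · exact ⟨n * a, b, by simpa only [mul_assoc] using hadd hu (hv.trans_le hp h)⟩
  · rintro u ⟨a, b, hu⟩
    exact ⟨a, b, hu.neg⟩
  · rintro r u ⟨a, b, hu⟩
    rcases hp.nonneg_or_nonneg_neg r with hr | hr
    · exact ⟨r * a, b, by simpa only [mul_assoc] using hu.mul_left hp hr⟩
    · exact ⟨-r * a, b, by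
        simpa only [mul_assoc, neg_mul, neg_neg] using (hu.mul_left hp hr).neg⟩
  · rintro r u ⟨a, b, hu⟩
    rcases hp.nonneg_or_nonneg_neg r with hr | hr
    · exact ⟨a, b * r, by simpa only [mul_assoc] using hu.mul_right hp hr⟩
    · exact ⟨a, b * -r, by
        simpa only [mul_assoc, mul_neg, neg_neg] using (hu.mul_right hp hr).neg⟩

theorem isConvexSet_convexHullSpan (hp : IsQuasiOrdering p) (x : R) :
    IsConvexSet p (convexHullSpan p x) := by
  rintro u v h0u huv ⟨a, b, hv⟩
  exact ⟨a, b, hp.absLE_of_nonneg_of_le h0u (hp.trans _ _ _ huv hv.1)⟩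

theorem mem_convexHullSpan_self (hp : IsQuasiOrdering p) (x : R) : x ∈ convexHullSpan p x := by
  rcases hp.nonneg_or_nonneg_neg x with hx | hx
  · exact ⟨1, 1, by simpa using hp.absLE_of_nonneg_of_le hx (hp.refl x)⟩
  · exact ⟨-1, 1, by simpa using (hp.absLE_of_nonneg_of_le hx (hp.refl (-x))).neg⟩

theorem exists_one_le_mul_of_one_mem_convexHullSpan (hp : IsQuasiOrdering p)
    (h : 1 ∈ convexHullSpan p x) : ∃ y, p 1 (x * y) := by
  obtain ⟨a, b, hab⟩ := h
  exact ⟨b * a, by simpa [mul_assoc] using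
    hp.one_le_mul_swap (z := x * b) (by simpa [mul_assoc] using hab.1)⟩

theorem isIdealSet_support (hp : IsQuasiOrdering p) : IsIdealSet (support p) :=
  ⟨⟨hp.refl 0, hp.refl 0⟩, hp.add_mem_support, hp.neg_mem_support,
    fun r _ hx => hp.mul_mem_support_left r hx, fun r _ hx => hp.mul_mem_support_right r hx⟩

theorem isConvexSet_support (hp : IsQuasiOrdering p) : IsConvexSet p (support p) :=
  fun _ _ h0u huv hv => ⟨hp.trans _ _ _ huv hv.1, h0u⟩

theorem support_ne_univ (hp : IsQuasiOrdering p) : support p ≠ Set.univ := fun h =>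
  hp.qr1.2 (show (1 : R) ∈ support p from h ▸ Set.mem_univ 1).1

theorem support_subset_of_isConvexSet {I : Set R} (hI : IsIdealSet I) (hc : IsConvexSet p I) :
    support p ⊆ I :=
  fun w hw => hc w 0 hw.2 hw.1 hI.zero_mem

theorem eq_support_of_isSpecial (hp : IsQuasiOrdering p) (hs : IsSpecial p) {I : Set R}
    (hI : IsIdealSet I) (hc : IsConvexSet p I) (hne : I ≠ Set.univ) : I = support p := by
  refine (support_subset_of_isConvexSet hI hc).antisymm' fun w hw => ?_
  by_contra hwq
  obtain ⟨y, hy⟩ := hs w hwq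
  exact hne (hI.eq_univ_of_one_mem (hc 1 (w * y) hp.qr1.1 hy (hI.mul_mem_right y hw)))

theorem isSpecial_of_forall_eq_support (hp : IsQuasiOrdering p)
    (h : ∀ I : Set R, IsIdealSet I → IsConvexSet p I → I ≠ Set.univ → I = support p) :
    IsSpecial p := by
  intro x hx
  have hK : convexHullSpan p x = Set.univ := by
    by_contra hne
    have hKq := h _ (hp.isIdealSet_convexHullSpan x) (hp.isConvexSet_convexHullSpan x) hne
    exact hx (hKq ▸ hp.mem_convexHullSpan_self x)
  exact hp.exists_one_le_mul_of_one_mem_convexHullSpan (hK ▸ Set.mem_univ 1)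

end IsQuasiOrdering

/-- Proposition 5.9: a quasi-ordering ⪯ with support q is special (for every
x ∉ q there is y with 1 ⪯ xy) if and only if q is the only proper ⪯-convex
two-sided ideal of R. -/
theorem special_iff_support_only_convex_ideal (p : R → R → Prop)
    (hp : IsQuasiOrdering p) :
    (∀ x : R, ¬ (p x 0 ∧ p 0 x) → ∃ y : R, p 1 (x * y)) ↔
      {I : Set R | IsIdealSet I ∧ (∀ x y : R, p 0 x → p x y → y ∈ I → x ∈ I) ∧
          I ≠ Set.univ} =
        {{x : R | p x 0 ∧ p 0 x}} := by
  change IsQuasiOrdering.IsSpecial p ↔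
    {I : Set R | IsIdealSet I ∧ IsQuasiOrdering.IsConvexSet p I ∧ I ≠ Set.univ} =
      {IsQuasiOrdering.support p}
  rw [Set.eq_singleton_iff_unique_mem]
  constructor
  · intro hs
    exact ⟨⟨hp.isIdealSet_support, hp.isConvexSet_support, hp.support_ne_univ⟩,
      fun I ⟨hI, hc, hne⟩ => hp.eq_support_of_isSpecial hs hI hc hne⟩
  · rintro ⟨-, hunique⟩
    exact hp.isSpecial_of_forall_eq_support fun I hI hc hne => hunique I ⟨hI, hc, hne⟩
end
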